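/- arXiv:2005.02785 — 3 statements merged into one kernel-verified Lean document; each statement's English description precedes it below -/
import Mathlib

section
/- Let f : ℝⁿ → ℝ be a bounded measurable function and g : ℝⁿ → ℝ a function such that for almost every x ∈ ℝⁿ, the ball average (1/vol(B(x,r))) ∫_{B(x,r)} f tends to g(x) as r → ∞. Then g is almost everywhere equal to a constant. -/
/-!
Averages of a bounded function over two balls of the same radius `r` differ by at most
`‖f‖_∞` times the volume of their symmetric difference over the volume of a ball. For centres
at distance `d` that ratio is at most `2 ((1 + d / r) ^ n - 1)`, which tends to `0` as `r → ∞`.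
Hence the limit of the ball averages does not depend on the centre wherever it exists, so `g`
equals its value at any single point of convergence almost everywhere.
-/

open MeasureTheory Filter Metric Topology Module

section SetIntegral

variable {α F : Type*} [MeasurableSpace α] {μ : Measure α}
  [NormedAddCommGroup F] [NormedSpace ℝ F] {f : α → F} {s t : Set α} {M : ℝ}

theorem norm_setIntegral_sub_setIntegral_le (hs : MeasurableSet s) (ht : MeasurableSet t)
    (hsμ : μ s < ⊤) (htμ : μ t < ⊤) (hf : AEStronglyMeasurable f μ) (hM : ∀ x, ‖f x‖ ≤ M) :
    ‖∫ x in s, f x ∂μ - ∫ x in t, f x ∂μ‖ ≤ M * (μ.real (s \ t) + μ.real (t \ s)) := by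
  have hint : ∀ u, μ u < ⊤ → IntegrableOn f u μ := fun u hu =>
    Measure.integrableOn_of_bounded hu.ne hf (ae_of_all _ hM)
  have hsplit : ∫ x in s, f x ∂μ - ∫ x in t, f x ∂μ
      = ∫ x in s \ t, f x ∂μ - ∫ x in t \ s, f x ∂μ := by
    rw [← integral_inter_add_sdiff ht (hint s hsμ), ← integral_inter_add_sdiff hs (hint t htμ),
      Set.inter_comm]
    abel
  rw [hsplit, mul_add]
  refine (norm_sub_le _ _).trans (add_le_add ?_ ?_) <;>
    exact norm_setIntegral_le_of_norm_le_const
      ((measure_mono Set.sdiff_subset).trans_lt ‹_›) fun x _ => hM x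

theorem norm_setAverage_sub_setAverage_le (hs : MeasurableSet s) (ht : MeasurableSet t)
    (hsμ : μ s < ⊤) (htμ : μ t < ⊤) (hst : μ.real s = μ.real t)
    (hf : AEStronglyMeasurable f μ) (hM : ∀ x, ‖f x‖ ≤ M) :
    ‖⨍ x in s, f x ∂μ - ⨍ x in t, f x ∂μ‖ ≤
      M * (μ.real (s \ t) + μ.real (t \ s)) / μ.real s := by
  rw [setAverage_eq, setAverage_eq, ← hst, ← smul_sub, norm_smul, norm_inv, Real.norm_eq_abs,
    abs_of_nonneg measureReal_nonneg, inv_mul_eq_div]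
  gcongr
  exact norm_setIntegral_sub_setIntegral_le hs ht hsμ htμ hf hM

end SetIntegral

section Ball

variable {E F : Type*} [NormedAddCommGroup E] [NormedSpace ℝ E] [MeasurableSpace E]
  [BorelSpace E] [FiniteDimensional ℝ E] (μ : Measure E) [μ.IsAddHaarMeasure]
  [NormedAddCommGroup F] [NormedSpace ℝ F]

theorem addHaar_real_ball_of_pos (x : E) {r : ℝ} (hr : 0 < r) :
    μ.real (ball x r) = r ^ finrank ℝ E * μ.real (ball 0 1) := by
  rw [measureReal_def, μ.addHaar_ball_of_pos x hr, ENNReal.toReal_mul,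
    ENNReal.toReal_ofReal (by positivity), ← measureReal_def]

theorem addHaar_real_ball_sdiff_ball_le (x y : E) {r : ℝ} (hr : 0 < r) :
    μ.real (ball x r \ ball y r) ≤
      ((r + dist x y) ^ finrank ℝ E - r ^ finrank ℝ E) * μ.real (ball 0 1) := by
  have hr' : 0 < r + dist x y := by positivity
  have hsub : ball y r ⊆ ball y (r + dist x y) := ball_subset_ball (by simp)
  calc μ.real (ball x r \ ball y r) ≤ μ.real (ball y (r + dist x y) \ ball y r) :=
        measureReal_mono (Set.sdiff_subset_sdiff_left (ball_subset_ball' (by simp)))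
          ((measure_mono Set.sdiff_subset).trans_lt measure_ball_lt_top).ne
    _ = μ.real (ball y (r + dist x y)) - μ.real (ball y r) :=
        measureReal_sdiff hsub measurableSet_ball measure_ball_lt_top.ne
    _ = _ := by rw [addHaar_real_ball_of_pos μ y hr', addHaar_real_ball_of_pos μ y hr]; ring

variable {μ} {f : E → F} {M : ℝ}

theorem norm_setAverage_ball_sub_setAverage_ball_le (hf : AEStronglyMeasurable f μ)
    (hM : ∀ x, ‖f x‖ ≤ M) (x y : E) {r : ℝ} (hr : 0 < r) :
    ‖⨍ z in ball x r, f z ∂μ - ⨍ z in ball y r, f z ∂μ‖ ≤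
      2 * M * ((1 + dist x y / r) ^ finrank ℝ E - 1) := by
  have hM0 : 0 ≤ M := (norm_nonneg _).trans (hM x)
  have hunit : 0 < μ.real (ball (0 : E) 1) :=
    ENNReal.toReal_pos (measure_ball_pos μ 0 one_pos).ne' measure_ball_lt_top.ne
  have hsdiff := addHaar_real_ball_sdiff_ball_le μ x y hr
  have hsdiff' := addHaar_real_ball_sdiff_ball_le μ y x hr
  rw [dist_comm] at hsdiff'
  calc _ ≤ M * (μ.real (ball x r \ ball y r) + μ.real (ball y r \ ball x r)) /
        μ.real (ball x r) :=
        norm_setAverage_sub_setAverage_le measurableSet_ball measurableSet_ball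
          measure_ball_lt_top measure_ball_lt_top
          (by rw [addHaar_real_ball_of_pos μ x hr, addHaar_real_ball_of_pos μ y hr]) hf hM
    _ ≤ M * (2 * (((r + dist x y) ^ finrank ℝ E - r ^ finrank ℝ E) * μ.real (ball 0 1))) /
        μ.real (ball x r) := by gcongr; linarith
    _ = _ := by
        rw [addHaar_real_ball_of_pos μ x hr, one_add_div hr.ne', div_pow, add_comm r]
        field_simp

theorem tendsto_setAverage_ball_sub_setAverage_ball (hf : AEStronglyMeasurable f μ)
    (hM : ∀ x, ‖f x‖ ≤ M) (x y : E) :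
    Tendsto (fun r => ⨍ z in ball x r, f z ∂μ - ⨍ z in ball y r, f z ∂μ) atTop (𝓝 0) := by
  have hbound : Tendsto (fun r : ℝ => 2 * M * ((1 + dist x y / r) ^ finrank ℝ E - 1))
      atTop (𝓝 0) := by
    have h := (((tendsto_const_nhds (x := dist x y)).div_atTop tendsto_id).const_add 1).pow (finrank ℝ E)
      |>.sub_const 1 |>.const_mul (2 * M)
    simpa using h
  refine squeeze_zero_norm' ?_ hbound
  filter_upwards [eventually_gt_atTop 0] with r hr
  exact norm_setAverage_ball_sub_setAverage_ball_le hf hM x y hr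

theorem ae_eq_const_of_tendsto_setAverage_ball (hf : AEStronglyMeasurable f μ)
    (hM : ∀ x, ‖f x‖ ≤ M) {g : E → F}
    (hg : ∀ᵐ x ∂μ, Tendsto (fun r => ⨍ z in ball x r, f z ∂μ) atTop (𝓝 (g x))) :
    ∃ c, g =ᵐ[μ] fun _ => c := by
  obtain ⟨x₀, hx₀⟩ := hg.exists
  refine ⟨g x₀, ?_⟩
  filter_upwards [hg] with x hx
  refine tendsto_nhds_unique ?_ hx₀
  simpa using hx.sub (tendsto_setAverage_ball_sub_setAverage_ball hf hM x x₀)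

end Ball

/-- If `f` is a bounded measurable function on `ℝⁿ` whose ball averages over `B(x,r)`
converge as `r → ∞` to `g x` for almost every `x`, then `g` is a.e. constant. -/
theorem ae_const_of_ball_average_tendsto
    {n : ℕ} (f g : EuclideanSpace ℝ (Fin n) → ℝ)
    (hf : Measurable f) (hbd : ∃ M : ℝ, ∀ x, |f x| ≤ M)
    (hconv : ∀ᵐ x ∂(volume : Measure (EuclideanSpace ℝ (Fin n))),
      Tendsto (fun r : ℝ => ⨍ y in ball x r, f y) atTop (nhds (g x))) :
    ∃ c : ℝ, g =ᵐ[(volume : Measure (EuclideanSpace ℝ (Fin n)))] fun _ => c := by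
  obtain ⟨M, hM⟩ := hbd
  exact ae_eq_const_of_tendsto_setAverage_ball hf.aestronglyMeasurable hM hconv
end

section
/- Let a > 0 and C₁, C₂ > 0 with C₁ e^{a(d − 2δ')} > C₂ for fixed d > 0, δ' > 0. Suppose V : (0,∞) → ℝ satisfies C₁ e^{ar} ≤ |V(r)| ≤ C₂ e^{ar} for all large r. Then there is a constant C > 0 such that for all sufficiently large r, and all s ∈ [r−δ', r+δ'], t ∈ [r+d−δ', r+d+δ'], one has |V(t)| − |V(s)| > 0 and (|V(s)| + |V(t)|) / (|V(r+d)| − |V(r)|) ≤ C. -/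
open Set Real

/-!
Between two radii `s ≤ r + δ'` and `t ≥ r + d - δ'` the two-sided exponential bounds give
`|V t| - |V s| ≥ e^{a(r+δ')} (C₁ e^{a(d-2δ')} - C₂)`, which is positive by the gap hypothesis.
Applied to `s, t` this is the positivity claim; applied to `r, r + d` it bounds the denominator
below, while the numerator is at most `2 C₂ e^{a(r+d+δ')}`. The factor `e^{a(r+δ')}` cancels.
-/

section ExponentialBounds

variable {g : ℝ → ℝ} {a C₁ C₂ R : ℝ}

lemma le_mul_exp_of_bound_of_le (hg : ∀ r ≥ R, g r ≤ C₂ * exp (a * r)) (ha : 0 ≤ a)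
    (hC₂ : 0 ≤ C₂) {s u : ℝ} (hRs : R ≤ s) (hsu : s ≤ u) : g s ≤ C₂ * exp (a * u) :=
  (hg s hRs).trans <| by gcongr

lemma mul_exp_le_of_bound_of_le (hg : ∀ r ≥ R, C₁ * exp (a * r) ≤ g r) (ha : 0 ≤ a)
    (hC₁ : 0 ≤ C₁) {u t : ℝ} (hut : u ≤ t) (hRt : R ≤ t) : C₁ * exp (a * u) ≤ g t :=
  le_trans (by gcongr) (hg t hRt)

lemma exp_mul_gap_le_sub (hg : ∀ r ≥ R, C₁ * exp (a * r) ≤ g r ∧ g r ≤ C₂ * exp (a * r))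
    (ha : 0 ≤ a) (hC₁ : 0 ≤ C₁) (hC₂ : 0 ≤ C₂) {d δ r s t : ℝ} (hRs : R ≤ s) (hs : s ≤ r + δ)
    (hRt : R ≤ t) (ht : r + d - δ ≤ t) :
    exp (a * (r + δ)) * (C₁ * exp (a * (d - 2 * δ)) - C₂) ≤ g t - g s := by
  have hupper := le_mul_exp_of_bound_of_le (fun r hr => (hg r hr).2) ha hC₂ hRs hs
  have hlower := mul_exp_le_of_bound_of_le (fun r hr => (hg r hr).1) ha hC₁ ht hRt
  have hsplit : exp (a * (r + d - δ)) = exp (a * (d - 2 * δ)) * exp (a * (r + δ)) := by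
    rw [← exp_add]; ring_nf
  rw [hsplit] at hlower
  linarith

end ExponentialBounds

/-- If `|V|` grows like `e^{ar}` and `C₁ e^{a(d−2δ')} > C₂`, then there is `C > 0` such
that for all large `r`, for all `s ∈ [r−δ', r+δ']` and `t ∈ [r+d−δ', r+d+δ']`, one has
`|V t| − |V s| > 0` and `(|V s| + |V t|)/(|V (r+d)| − |V r|) ≤ C`. -/
theorem annular_volume_ratio_bounded
    (a C₁ C₂ d δ' : ℝ) (ha : 0 < a) (hC₁ : 0 < C₁) (hC₂ : 0 < C₂)
    (hd : 0 < d) (hδ' : 0 < δ') (hgap : C₂ < C₁ * exp (a * (d - 2 * δ')))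
    (V : ℝ → ℝ)
    (hV : ∃ R : ℝ, ∀ r ≥ R, C₁ * exp (a * r) ≤ |V r| ∧ |V r| ≤ C₂ * exp (a * r)) :
    ∃ C > (0:ℝ), ∃ R' : ℝ, ∀ r ≥ R', ∀ s ∈ Icc (r - δ') (r + δ'),
      ∀ t ∈ Icc (r + d - δ') (r + d + δ'),
        0 < |V t| - |V s| ∧ (|V s| + |V t|) / (|V (r + d)| - |V r|) ≤ C := by
  obtain ⟨R, hR⟩ := hV
  set gap := C₁ * exp (a * (d - 2 * δ')) - C₂
  have hgap_pos : 0 < gap := sub_pos.2 hgap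
  refine ⟨2 * C₂ * exp (a * d) / gap, by positivity, R + δ', fun r hr s hs t ht => ?_⟩
  have hRs : R ≤ s := by linarith [hs.1]
  have hRt : R ≤ t := by linarith [ht.1]
  have hst := exp_mul_gap_le_sub hR ha.le hC₁.le hC₂.le hRs hs.2 hRt ht.1
  have hden := exp_mul_gap_le_sub hR ha.le hC₁.le hC₂.le (d := d) (δ := δ') (r := r)
    (s := r) (t := r + d) (by linarith) (by linarith) (by linarith) (by linarith)
  have hE : 0 < exp (a * (r + δ')) := exp_pos _
  have hnum : |V s| + |V t| ≤ exp (a * (r + δ')) * (2 * C₂ * exp (a * d)) := by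
    have hupper := fun r hr => (hR r hr).2
    have hVs := le_mul_exp_of_bound_of_le hupper ha.le hC₂.le hRs (u := r + d + δ')
      (by linarith [hs.2])
    have hVt := le_mul_exp_of_bound_of_le hupper ha.le hC₂.le hRt ht.2
    have hsplit : exp (a * (r + d + δ')) = exp (a * (r + δ')) * exp (a * d) := by
      rw [← exp_add]; ring_nf
    rw [hsplit] at hVs hVt
    linarith
  refine ⟨lt_of_lt_of_le (by positivity) hst, ?_⟩
  calc (|V s| + |V t|) / (|V (r + d)| - |V r|)
      ≤ exp (a * (r + δ')) * (2 * C₂ * exp (a * d)) / (exp (a * (r + δ')) * gap) :=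
        div_le_div₀ (by positivity) hnum (by positivity) hden
    _ = 2 * C₂ * exp (a * d) / gap := mul_div_mul_left _ _ hE.ne'
end

section
/- Let λ, μ ∈ ℝ be nonzero with λ ≠ μ and λ/μ irrational. Let θ_λ, θ_μ ∈ ℝ, and let Ẽ_λ, Ẽ_μ : (0,∞) → ℝ tend to 0 at infinity. Then for every L ∈ [−1, 1] there exists a sequence t_k → ∞ such that cos(λ t_k + θ_λ) + Ẽ_λ(t_k) → 1 and cos(μ t_k + θ_μ) + Ẽ_μ(t_k) → L; consequently the ratio (cos(μt+θ_μ)+Ẽ_μ(t))/(cos(λt+θ_λ)+Ẽ_λ(t)) has every value in [−1,1] as a subsequential limit along t → ∞. -/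
/-!
Choose times `t` at which `λ t + θ_λ` is a multiple of `2π`, say `t = (2πn - θ_λ)/λ`. At these
times `μ t + θ_μ ≡ n · 2π(μ/λ) + c (mod 2π)`, and since `μ/λ` is irrational the multiples of
`2π(μ/λ)` are dense on the circle (Kronecker), so a subsequence of `n` steers `μ t + θ_μ` to
`arccos L` modulo `2π`. The error terms vanish along `t → ∞`.
-/

open Set Real Filter Topology

theorem AddCircle.exists_strictMono_tendsto_nsmul {p a : ℝ} [Fact (0 < p)]
    (ha : Irrational (a / p)) (z : AddCircle p) :
    ∃ ψ : ℕ → ℕ, StrictMono ψ ∧ Tendsto (fun k ↦ ψ k • (a : AddCircle p)) atTop (𝓝 z) :=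
  have hz : MapClusterPt z atTop (· • (a : AddCircle p) : ℕ → AddCircle p) :=
    ((mapClusterPt_atTop_nsmul_tfae z _).out 0 3).2 (AddCircle.denseRange_zsmul_coe_iff.2 ha z)
  hz.tendsto_subseq

theorem Real.Angle.exists_strictMono_tendsto_nsmul {ξ : ℝ} (hξ : Irrational ξ) (z : Angle) :
    ∃ ψ : ℕ → ℕ, StrictMono ψ ∧
      Tendsto (fun k ↦ ψ k • ((2 * π * ξ : ℝ) : Angle)) atTop (𝓝 z) := by
  have : Fact (0 < 2 * π) := ⟨two_pi_pos⟩
  exact AddCircle.exists_strictMono_tendsto_nsmul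
    (by rwa [mul_div_cancel_left₀ _ two_pi_pos.ne']) z

theorem exists_tendsto_atTop_angle_eq_zero_tendsto_of_pos {lam mu : ℝ} (hlam : 0 < lam)
    (hirr : Irrational (mu / lam)) (θlam θmu : ℝ) (z : Angle) :
    ∃ t : ℕ → ℝ, Tendsto t atTop atTop ∧ (∀ k, ((lam * t k + θlam : ℝ) : Angle) = 0) ∧
      Tendsto (fun k ↦ ((mu * t k + θmu : ℝ) : Angle)) atTop (𝓝 z) := by
  set c := θmu - mu * θlam / lam
  obtain ⟨ψ, hψ, hψz⟩ := Angle.exists_strictMono_tendsto_nsmul hirr (z - c)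
  refine ⟨fun k ↦ (2 * π / lam) * ψ k - θlam / lam, ?_, fun k ↦ ?_, ?_⟩
  · exact ((tendsto_natCast_atTop_atTop.comp hψ.tendsto_atTop).const_mul_atTop
      (by positivity)).atTop_add tendsto_const_nhds
  · have hangle : lam * ((2 * π / lam) * ψ k - θlam / lam) + θlam = ψ k * (2 * π) := by
      field_simp
      ring
    rw [hangle, ← nsmul_eq_mul, Angle.coe_nsmul, Angle.coe_two_pi, nsmul_zero]
  · have hangle : ∀ k, mu * ((2 * π / lam) * ψ k - θlam / lam) + θmu
        = ψ k * (2 * π * (mu / lam)) + c := by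
      intro k
      simp only [c]
      field_simp
      ring
    simpa only [hangle, Angle.coe_add, ← nsmul_eq_mul, Angle.coe_nsmul, sub_add_cancel]
      using hψz.add_const (c : Angle)

theorem exists_tendsto_atTop_angle_eq_zero_tendsto {lam mu : ℝ}
    (hirr : Irrational (mu / lam)) (θlam θmu : ℝ) (z : Angle) :
    ∃ t : ℕ → ℝ, Tendsto t atTop atTop ∧ (∀ k, ((lam * t k + θlam : ℝ) : Angle) = 0) ∧
      Tendsto (fun k ↦ ((mu * t k + θmu : ℝ) : Angle)) atTop (𝓝 z) := by
  have hlam : lam ≠ 0 := by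
    rintro rfl
    simp at hirr
  rcases hlam.lt_or_gt with hneg | hpos
  · obtain ⟨t, ht, hlamt, hmut⟩ := exists_tendsto_atTop_angle_eq_zero_tendsto_of_pos
      (neg_pos.2 hneg) (by rw [div_neg]; exact hirr.neg) (-θlam) θmu z
    refine ⟨t, ht, fun k ↦ ?_, hmut⟩
    rw [← neg_eq_zero, ← Angle.coe_neg, ← hlamt k]
    ring_nf
  · exact exists_tendsto_atTop_angle_eq_zero_tendsto_of_pos hpos hirr θlam θmu z

theorem oscillation_irrational_case_general
    (lam mu : ℝ)
    (hirr : Irrational (lam / mu))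
    (θlam θmu : ℝ) (Elam Emu : ℝ → ℝ)
    (hElam : Tendsto Elam atTop (nhds 0)) (hEmu : Tendsto Emu atTop (nhds 0)) :
    ∀ L ∈ Icc (-1 : ℝ) 1, ∃ t : ℕ → ℝ, Tendsto t atTop atTop ∧
      Tendsto (fun k => cos (lam * t k + θlam) + Elam (t k)) atTop (nhds 1) ∧
      Tendsto (fun k => cos (mu * t k + θmu) + Emu (t k)) atTop (nhds L) ∧
      Tendsto (fun k => (cos (mu * t k + θmu) + Emu (t k)) /
        (cos (lam * t k + θlam) + Elam (t k))) atTop (nhds L) := by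
  intro L hL
  obtain ⟨t, ht, hlamt, hmut⟩ := exists_tendsto_atTop_angle_eq_zero_tendsto
    (by simpa only [inv_div] using hirr.inv) θlam θmu (arccos L)
  have hcos_lam : ∀ k, cos (lam * t k + θlam) = 1 := fun k ↦ by
    rw [← Angle.cos_coe, hlamt k, Angle.cos_zero]
  have hcos_mu : Tendsto (fun k ↦ cos (mu * t k + θmu)) atTop (𝓝 L) := by
    simpa only [Function.comp_def, Angle.cos_coe, cos_arccos hL.1 hL.2]
      using (Angle.continuous_cos.tendsto _).comp hmut
  have hA : Tendsto (fun k ↦ cos (lam * t k + θlam) + Elam (t k)) atTop (𝓝 1) := by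
    simpa only [hcos_lam, add_zero, Function.comp_def] using (hElam.comp ht).const_add 1
  have hB : Tendsto (fun k ↦ cos (mu * t k + θmu) + Emu (t k)) atTop (𝓝 L) := by
    simpa only [add_zero, Function.comp_def] using hcos_mu.add (hEmu.comp ht)
  exact ⟨t, ht, hA, hB, by simpa only [Pi.div_def, div_one] using hB.div hA one_ne_zero⟩

/-- Kronecker-type oscillation: if `λ/μ` is irrational and the error terms tend to `0`,
then for every `L ∈ [−1,1]` there is a sequence `t_k → ∞` along which
`cos(λt_k + θ_λ) + Ẽ_λ(t_k) → 1`, `cos(μt_k + θ_μ) + Ẽ_μ(t_k) → L`, and the ratio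
of the two expressions tends to `L`. -/
theorem oscillation_irrational_case
    (lam mu : ℝ) (hlam : lam ≠ 0) (hmu : mu ≠ 0) (hne : lam ≠ mu)
    (hirr : Irrational (lam / mu))
    (θlam θmu : ℝ) (Elam Emu : ℝ → ℝ)
    (hElam : Tendsto Elam atTop (nhds 0)) (hEmu : Tendsto Emu atTop (nhds 0)) :
    ∀ L ∈ Icc (-1 : ℝ) 1, ∃ t : ℕ → ℝ, Tendsto t atTop atTop ∧
      Tendsto (fun k => cos (lam * t k + θlam) + Elam (t k)) atTop (nhds 1) ∧
      Tendsto (fun k => cos (mu * t k + θmu) + Emu (t k)) atTop (nhds L) ∧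
      Tendsto (fun k => (cos (mu * t k + θmu) + Emu (t k)) /
        (cos (lam * t k + θlam) + Elam (t k))) atTop (nhds L) :=
  oscillation_irrational_case_general lam mu hirr θlam θmu Elam Emu hElam hEmu
end
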